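/- Let γ, γ', C, η > 0 and ρ ∈ (0, γ) satisfy η ≤ (1/4)·min{1 − 2^{−γ}, 1 − 2^{−γ'}, 1 − 2^{ρ−γ}}. Then for every bounded sequence {x_k} of nonnegative reals satisfying, for all k ≥ 0, x_k ≤ C·2^{−γk} + η·Σ_{l=0}^{k−1} 2^{−γ(k−l)} x_l + η·Σ_{l=k}^{∞} 2^{−γ'|k−l|} x_l, it follows that x_k ≤ (4C + ‖x‖_{ℓ^∞})·2^{−ρk} for all k ≥ 0. -/

import Mathlib

/-!
Put `P k = 2 ^ (-ρ k)` and `D = 4 C + ‖x‖_∞`. Trivially `x k ≤ D P k + ‖x‖_∞`. If `x l ≤ D P l + ε`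
for all `l`, insert this into the recursion: the weights are geometric with ratios `2 ^ (-γ)`,
`2 ^ (-γ')` and (after factoring out `P k`) `2 ^ (ρ - γ)`, so each weighted sum is at most its bound
divided by `1 - ratio`, and the condition on `η` turns each into a quarter of that bound. This gives
`x k ≤ D P k + ε / 2`; iterating the halving sends the error term to `0`.
-/

open Finset Filter Topology

namespace Statement18

lemma le_of_forall_le_add_of_contract {ι : Type*} {x a : ι → ℝ} {M c : ℝ} (hM : 0 ≤ M)
    (hc0 : 0 ≤ c) (hc1 : c < 1) (h0 : ∀ k, x k ≤ a k + M)
    (hstep : ∀ ε, 0 ≤ ε → (∀ k, x k ≤ a k + ε) → ∀ k, x k ≤ a k + c * ε) (k : ι) :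
    x k ≤ a k := by
  have hiter : ∀ m : ℕ, ∀ k, x k ≤ a k + c ^ m * M := by
    intro m
    induction m with
    | zero => simpa using h0
    | succ m ih => simpa [pow_succ, mul_comm c, mul_assoc] using hstep _ (by positivity) ih
  have hlim : Tendsto (fun m : ℕ => a k + c ^ m * M) atTop (𝓝 (a k + 0 * M)) :=
    tendsto_const_nhds.add ((tendsto_pow_atTop_nhds_zero_of_lt_one hc0 hc1).mul_const M)
  simpa using ge_of_tendsto' hlim fun m => hiter m k

lemma sum_range_pow_sub_le {t : ℝ} (h0 : 0 ≤ t) (h1 : t < 1) (k : ℕ) :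
    ∑ l ∈ range k, t ^ (k - l) ≤ 1 / (1 - t) := by
  calc ∑ l ∈ range k, t ^ (k - l) = ∑ j ∈ range k, t ^ (k - (k - 1 - j)) :=
        (sum_range_reflect (fun l => t ^ (k - l)) k).symm
    _ ≤ ∑ j ∈ range k, t ^ j := by
        refine sum_le_sum fun j hj => pow_le_pow_of_le_one h0 h1.le ?_
        have := mem_range.mp hj
        omega
    _ ≤ t ^ 0 / (1 - t) := by
        rw [range_eq_Ico]; exact geom_sum_Ico_le_of_lt_one h0 h1
    _ = 1 / (1 - t) := by rw [pow_zero]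

lemma tsum_pow_mul_le {r B : ℝ} {y : ℕ → ℝ} (h0 : 0 ≤ r) (h1 : r < 1)
    (hy0 : ∀ n, 0 ≤ y n) (hyB : ∀ n, y n ≤ B) :
    ∑' n, r ^ n * y n ≤ B / (1 - r) := by
  have hle : ∀ n, r ^ n * y n ≤ B * r ^ n := fun n => by
    rw [mul_comm B]; exact mul_le_mul_of_nonneg_left (hyB n) (pow_nonneg h0 n)
  have hsum : Summable fun n => B * r ^ n := (summable_geometric_of_lt_one h0 h1).mul_left B
  calc ∑' n, r ^ n * y n ≤ ∑' n, B * r ^ n :=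
        (hsum.of_nonneg_of_le (fun n => mul_nonneg (pow_nonneg h0 n) (hy0 n)) hle).tsum_le_tsum
          hle hsum
    _ = B / (1 - r) := by rw [tsum_mul_left, tsum_geometric_of_lt_one h0 h1, div_eq_mul_inv]

lemma mul_div_one_sub_le {η a A c : ℝ} (hA : 0 ≤ A) (ha : a < 1) (hη : η ≤ c * (1 - a)) :
    η * (A / (1 - a)) ≤ c * A := by
  rw [mul_div_assoc', div_le_iff₀ (by linarith)]
  nlinarith

lemma rpow_neg_mul_natCast {b : ℝ} (hb : 0 ≤ b) (γ : ℝ) (n : ℕ) :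
    b ^ (-(γ * n)) = (b ^ (-γ)) ^ n := by
  rw [← Real.rpow_mul_natCast hb, neg_mul]

lemma sum_rpow_mul_le {b γ ρ D ε : ℝ} (hb : 1 < b) (hγ : 0 < γ) (hργ : ρ < γ) (hD : 0 ≤ D)
    (hε : 0 ≤ ε) {x : ℕ → ℝ} (hx : ∀ l, x l ≤ D * b ^ (-(ρ * l)) + ε) (k : ℕ) :
    ∑ l ∈ range k, b ^ (-(γ * (k - l))) * x l
      ≤ D * b ^ (-(ρ * k)) / (1 - b ^ (ρ - γ)) + ε / (1 - b ^ (-γ)) := by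
  have hb0 : 0 < b := by linarith
  have hterm : ∀ l ∈ range k, b ^ (-(γ * (k - l))) * x l
      ≤ D * b ^ (-(ρ * k)) * (b ^ (ρ - γ)) ^ (k - l) + ε * (b ^ (-γ)) ^ (k - l) := by
    intro l hl
    have hcast : ((k - l : ℕ) : ℝ) = k - l := Nat.cast_sub (mem_range.mp hl).le
    have hdecay : b ^ (-(γ * (k - l))) = (b ^ (-γ)) ^ (k - l) := by
      rw [← rpow_neg_mul_natCast hb0.le, hcast]
    have hshift :
        b ^ (-(γ * (k - l))) * b ^ (-(ρ * l)) = b ^ (-(ρ * k)) * (b ^ (ρ - γ)) ^ (k - l) := by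
      rw [← Real.rpow_mul_natCast hb0.le, hcast, ← Real.rpow_add hb0, ← Real.rpow_add hb0]
      ring_nf
    calc b ^ (-(γ * (k - l))) * x l ≤ b ^ (-(γ * (k - l))) * (D * b ^ (-(ρ * l)) + ε) := by
          gcongr; exact hx l
      _ = D * (b ^ (-(γ * (k - l))) * b ^ (-(ρ * l))) + ε * b ^ (-(γ * (k - l))) := by ring
      _ = _ := by rw [hshift, hdecay]; ring
  have hu := Real.rpow_lt_one_of_one_lt_of_neg hb (sub_neg.mpr hργ)
  have hs := Real.rpow_lt_one_of_one_lt_of_neg hb (neg_neg_of_pos hγ)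
  calc ∑ l ∈ range k, b ^ (-(γ * (k - l))) * x l
      ≤ D * b ^ (-(ρ * k)) * ∑ l ∈ range k, (b ^ (ρ - γ)) ^ (k - l)
        + ε * ∑ l ∈ range k, (b ^ (-γ)) ^ (k - l) := by
        rw [mul_sum, mul_sum, ← sum_add_distrib]; exact sum_le_sum hterm
    _ ≤ D * b ^ (-(ρ * k)) * (1 / (1 - b ^ (ρ - γ))) + ε * (1 / (1 - b ^ (-γ))) := by
        gcongr
        · exact sum_range_pow_sub_le (by positivity) hu k
        · exact sum_range_pow_sub_le (by positivity) hs k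
    _ = _ := by rw [mul_one_div, mul_one_div]

lemma tsum_rpow_mul_shift_le {b γ' ρ D ε : ℝ} (hb : 1 < b) (hγ' : 0 < γ') (hρ : 0 ≤ ρ)
    (hD : 0 ≤ D) {x : ℕ → ℝ} (hx0 : ∀ l, 0 ≤ x l) (hx : ∀ l, x l ≤ D * b ^ (-(ρ * l)) + ε)
    (k : ℕ) :
    ∑' n : ℕ, b ^ (-(γ' * n)) * x (k + n) ≤ (D * b ^ (-(ρ * k)) + ε) / (1 - b ^ (-γ')) := by
  have hb0 : 0 < b := by linarith
  have hxk : ∀ n, x (k + n) ≤ D * b ^ (-(ρ * k)) + ε := fun n => by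
    refine (hx (k + n)).trans ?_
    gcongr
    · exact hb.le
    · nlinarith [(Nat.cast_nonneg n : (0 : ℝ) ≤ n)]
  simpa only [rpow_neg_mul_natCast hb0.le] using tsum_pow_mul_le (by positivity)
    (Real.rpow_lt_one_of_one_lt_of_neg hb (neg_neg_of_pos hγ')) (fun n => hx0 _) hxk

lemma gronwall_halving_step {b γ γ' C η ρ D ε : ℝ} (hb : 1 < b) (hγ : 0 < γ) (hγ' : 0 < γ')
    (hC : 0 ≤ C) (hη : 0 ≤ η) (hρ : 0 ≤ ρ) (hργ : ρ < γ)
    (hηγ : η ≤ 1 / 4 * (1 - b ^ (-γ))) (hηγ' : η ≤ 1 / 4 * (1 - b ^ (-γ')))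
    (hηρ : η ≤ 1 / 4 * (1 - b ^ (ρ - γ))) (hCD : 4 * C ≤ D) {x : ℕ → ℝ} (hx0 : ∀ l, 0 ≤ x l)
    (hrec : ∀ k : ℕ, x k ≤ C * b ^ (-(γ * k)) + η * ∑ l ∈ range k, b ^ (-(γ * (k - l))) * x l
        + η * ∑' n : ℕ, b ^ (-(γ' * n)) * x (k + n))
    (hε : 0 ≤ ε) (hx : ∀ l, x l ≤ D * b ^ (-(ρ * l)) + ε) (k : ℕ) :
    x k ≤ D * b ^ (-(ρ * k)) + 1 / 2 * ε := by
  have hD : 0 ≤ D := by linarith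
  have hP0 : 0 ≤ b ^ (-(ρ * k)) := by positivity
  have hdecay : b ^ (-(γ * k)) ≤ b ^ (-(ρ * k)) :=
    Real.rpow_le_rpow_of_exponent_le hb.le (by nlinarith [(Nat.cast_nonneg k : (0 : ℝ) ≤ k)])
  have hfin₁ := mul_div_one_sub_le (mul_nonneg hD hP0)
    (Real.rpow_lt_one_of_one_lt_of_neg hb (sub_neg.mpr hργ)) hηρ
  have hfin₂ := mul_div_one_sub_le hε
    (Real.rpow_lt_one_of_one_lt_of_neg hb (neg_neg_of_pos hγ)) hηγ
  have htail := mul_div_one_sub_le (A := D * b ^ (-(ρ * k)) + ε) (by positivity)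
    (Real.rpow_lt_one_of_one_lt_of_neg hb (neg_neg_of_pos hγ')) hηγ'
  calc x k ≤ C * b ^ (-(γ * k)) + η * ∑ l ∈ range k, b ^ (-(γ * (k - l))) * x l
        + η * ∑' n : ℕ, b ^ (-(γ' * n)) * x (k + n) := hrec k
    _ ≤ C * b ^ (-(ρ * k)) + (η * (D * b ^ (-(ρ * k)) / (1 - b ^ (ρ - γ)))
          + η * (ε / (1 - b ^ (-γ)))) + η * ((D * b ^ (-(ρ * k)) + ε) / (1 - b ^ (-γ'))) := by
        rw [← mul_add]
        gcongr
        exacts [sum_rpow_mul_le hb hγ hργ hD hε hx k, tsum_rpow_mul_shift_le hb hγ' hρ hD hx0 hx k]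
    _ ≤ C * b ^ (-(ρ * k)) + (1 / 4 * (D * b ^ (-(ρ * k))) + 1 / 4 * ε)
          + 1 / 4 * (D * b ^ (-(ρ * k)) + ε) := by gcongr
    _ ≤ D * b ^ (-(ρ * k)) + 1 / 2 * ε := by
        linarith [mul_le_mul_of_nonneg_right hCD hP0, mul_nonneg hD hP0]

/-- A discrete Gronwall-type inequality: if `γ, γ', C, η > 0` and
`ρ ∈ (0,γ)` satisfy `η ≤ (1/4)·min{1-2^{-γ}, 1-2^{-γ'}, 1-2^{ρ-γ}}`, then every bounded
sequence of nonnegative reals `x_k` satisfying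
`x_k ≤ C·2^{-γk} + η·Σ_{l=0}^{k-1} 2^{-γ(k-l)} x_l + η·Σ_{l=k}^∞ 2^{-γ'|k-l|} x_l`
obeys `x_k ≤ (4C + ‖x‖_{ℓ^∞})·2^{-ρk}`. -/
theorem discrete_gronwall (γ γ' C η ρ : ℝ)
    (hγ : 0 < γ) (hγ' : 0 < γ') (hC : 0 < C) (hη : 0 < η)
    (hρ : 0 < ρ) (hργ : ρ < γ)
    (hηle : η ≤ (1 / 4) *
      min (1 - (2 : ℝ) ^ (-γ)) (min (1 - (2 : ℝ) ^ (-γ')) (1 - (2 : ℝ) ^ (ρ - γ))))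
    (x : ℕ → ℝ) (hx : ∀ k, 0 ≤ x k) (hbdd : BddAbove (Set.range x))
    (hrec : ∀ k : ℕ, x k ≤
      C * (2 : ℝ) ^ (-(γ * (k : ℝ)))
        + η * ∑ l ∈ Finset.range k, (2 : ℝ) ^ (-(γ * ((k : ℝ) - (l : ℝ)))) * x l
        + η * ∑' n : ℕ, (2 : ℝ) ^ (-(γ' * (n : ℝ))) * x (k + n)) :
    ∀ k : ℕ, x k ≤ (4 * C + ⨆ j, x j) * (2 : ℝ) ^ (-(ρ * (k : ℝ))) := by
  have hxM : ∀ j, x j ≤ ⨆ j, x j := le_ciSup hbdd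
  have hM : 0 ≤ ⨆ j, x j := (hx 0).trans (hxM 0)
  have hηγ : η ≤ 1 / 4 * (1 - (2 : ℝ) ^ (-γ)) := hηle.trans (by gcongr; exact min_le_left _ _)
  have hηγ' : η ≤ 1 / 4 * (1 - (2 : ℝ) ^ (-γ')) :=
    hηle.trans (by gcongr; exact (min_le_right _ _).trans (min_le_left _ _))
  have hηρ : η ≤ 1 / 4 * (1 - (2 : ℝ) ^ (ρ - γ)) :=
    hηle.trans (by gcongr; exact (min_le_right _ _).trans (min_le_right _ _))
  refine le_of_forall_le_add_of_contract hM (by norm_num : (0 : ℝ) ≤ 1 / 2) (by norm_num)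
    (fun k => ?_) (fun ε hε hxε => gronwall_halving_step one_lt_two hγ hγ' hC.le hη.le hρ.le hργ
      hηγ hηγ' hηρ (by linarith) hx hrec hε hxε)
  have : 0 ≤ (4 * C + ⨆ j, x j) * (2 : ℝ) ^ (-(ρ * (k : ℝ))) := by positivity
  linarith [hxM k]

end Statement18
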